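/- arXiv:quant-ph/0605090 — 3 statements merged into one kernel-verified Lean document; each statement's English description precedes it below -/
import Mathlib

section
/- Let d ≥ 2. If A is a d×d unitary matrix and D a diagonal unitary matrix such that V U = A D A* (where U = diag(q^j), V the cyclic shift, q = exp(2πi/d)), then V U has nondegenerate spectrum implies all entries of A have modulus d^{-1/2}; more precisely, every unit eigenvector v of V U satisfies |v_j| = d^{-1/2} for all j. -/
/-! Entrywise, `V U v = μ v` reads `q^(j+1) v (j+1) = μ v j`, and `|q| = 1`, so
`|v (j+1)| = |μ| |v j|`. Summing squares over the cyclic index gives `|μ| = 1`; hence all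
`|v j|` are equal, and `∑ |v j|^2 = 1` forces `|v j| = d^(-1/2)`. -/

open Matrix
open Fin.NatCast

def cyclicShift (R : Type*) [Zero R] [One R] (n : ℕ) : Matrix (Fin n) (Fin n) R :=
  of fun j k => if (k : ℕ) = ((j : ℕ) + 1) % n then 1 else 0

lemma cyclicShift_mulVec {R : Type*} [NonAssocSemiring R] {n : ℕ} [NeZero n]
    (w : Fin n → R) (j : Fin n) : (cyclicShift R n *ᵥ w) j = w (j + 1) := by
  have hval : ∀ k : Fin n, ((k : ℕ) = ((j : ℕ) + 1) % n) ↔ k = j + 1 := fun k => by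
    rw [← Fin.val_inj, Fin.val_add, Fin.val_one', Nat.add_mod_mod]
  simp [cyclicShift, mulVec, dotProduct, hval]

lemma Fin.apply_eq_apply_zero_of_forall_apply_add_one {n : ℕ} [NeZero n] {α : Type*}
    {f : Fin n → α} (hf : ∀ j, f (j + 1) = f j) (j : Fin n) : f j = f 0 := by
  have hnat : ∀ m : ℕ, f m = f 0 := by
    intro m
    induction m with
    | zero => simp
    | succ m ih => rw [Nat.cast_succ, hf, ih]
  simpa using hnat j

theorem norm_eq_of_weighted_shift_eigen {n : ℕ} [NeZero n] {c w : Fin n → ℂ} {μ : ℂ}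
    (hc : ∀ j, ‖c j‖ = 1) (hw : ∀ j, c (j + 1) * w (j + 1) = μ * w j)
    (hunit : ∑ j, ‖w j‖ ^ 2 = 1) (j : Fin n) : ‖w j‖ = 1 / √n := by
  have hstep : ∀ j, ‖w (j + 1)‖ = ‖μ‖ * ‖w j‖ := fun j => by
    simpa [hc] using congrArg norm (hw j)
  -- the shift permutes the entries, so it preserves `∑ ‖w j‖ ^ 2`
  have hμ : ‖μ‖ = 1 := by
    have hsq : ‖μ‖ ^ 2 = 1 := by
      calc ‖μ‖ ^ 2 = ∑ j, ‖w (j + 1)‖ ^ 2 := by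
            simp only [hstep, mul_pow, ← Finset.mul_sum, hunit, mul_one]
        _ = 1 := by
            rw [← hunit]
            exact Equiv.sum_comp (Equiv.addRight (1 : Fin n)) fun j => ‖w j‖ ^ 2
    exact (pow_eq_one_iff_of_nonneg (norm_nonneg μ) two_ne_zero).mp hsq
  have hconst : ∀ j, ‖w j‖ = ‖w 0‖ :=
    Fin.apply_eq_apply_zero_of_forall_apply_add_one (fun j => by rw [hstep, hμ, one_mul])
  have hw0 : ‖w 0‖ ^ 2 = 1 / n := by
    rw [Finset.sum_congr rfl fun j _ => by rw [hconst j], Finset.sum_const, Finset.card_univ,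
      Fintype.card_fin, nsmul_eq_mul] at hunit
    rw [eq_div_iff (Nat.cast_ne_zero.mpr (NeZero.ne n))]
    linarith
  rw [hconst, ← Real.sqrt_sq (norm_nonneg _), hw0, one_div, Real.sqrt_inv, one_div]

theorem stmt_5_general (d : ℕ) (q : ℂ)
    (hq : q = Complex.exp (2 * Real.pi * Complex.I / d))
    (U V : Matrix (Fin d) (Fin d) ℂ)
    (hU : U = Matrix.diagonal fun j : Fin d => q ^ (j : ℕ))
    (hV : V = Matrix.of fun j k : Fin d => if (k : ℕ) = ((j : ℕ) + 1) % d then (1 : ℂ) else 0)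
    (v : Fin d → ℂ) (μ : ℂ)
    (hev : (V * U).mulVec v = μ • v)
    (hunit : ∑ j, ‖v j‖ ^ 2 = 1) :
    ∀ j, ‖v j‖ = 1 / Real.sqrt d := by
  intro j
  have : NeZero d := ⟨j.pos.ne'⟩
  have hq1 : ‖q‖ = 1 :=
    hq ▸ (Complex.isPrimitiveRoot_exp d (NeZero.ne d)).norm'_eq_one (NeZero.ne d)
  refine norm_eq_of_weighted_shift_eigen (c := fun j : Fin d => q ^ (j : ℕ)) (μ := μ)
    (fun k => by simp [hq1]) (fun k => ?_) hunit j
  have h := congrFun hev k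
  rw [hU, hV, ← mulVec_mulVec] at h
  change (cyclicShift ℂ d *ᵥ _) k = _ at h
  simpa [cyclicShift_mulVec, mulVec_diagonal] using h

theorem stmt_5 (d : ℕ) (hd : 2 ≤ d) (q : ℂ)
    (hq : q = Complex.exp (2 * Real.pi * Complex.I / d))
    (U V : Matrix (Fin d) (Fin d) ℂ)
    (hU : U = Matrix.diagonal fun j : Fin d => q ^ (j : ℕ))
    (hV : V = Matrix.of fun j k : Fin d => if (k : ℕ) = ((j : ℕ) + 1) % d then (1 : ℂ) else 0)
    (v : Fin d → ℂ) (μ : ℂ)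
    (hev : (V * U).mulVec v = μ • v)
    (hunit : ∑ j, ‖v j‖ ^ 2 = 1) :
    ∀ j, ‖v j‖ = 1 / Real.sqrt d :=
  stmt_5_general d q hq U V hU hV v μ hev hunit
end

section
/- Let d be odd, q = exp(2πi/d), U = diag(q^j), V the cyclic shift, D = diag(q^{j(j+1)/2}), P₀ the DFT matrix with entries d^{-1/2} q^{jk}, and P_k := D^{-k} P₀ for k ∈ {0,...,d-1}. Then P_k* (V U^k) P_k = U; i.e. each V_k = V U^k is unitarily equivalent to U via the unbiased unitary P_k. -/
open Matrix

theorem stmt_13 (d : ℕ) (hd : Odd d) (hd2 : 2 ≤ d) (q : ℂ)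
    (hq : q = Complex.exp (2 * Real.pi * Complex.I / d))
    (U V D P₀ : Matrix (Fin d) (Fin d) ℂ)
    (hU : U = Matrix.diagonal fun j : Fin d => q ^ (j : ℕ))
    (hV : V = Matrix.of fun j l : Fin d => if (l : ℕ) = ((j : ℕ) + 1) % d then (1 : ℂ) else 0)
    (hD : D = Matrix.diagonal fun j : Fin d => q ^ ((j : ℕ) * ((j : ℕ) + 1) / 2))
    (hP₀ : P₀ = Matrix.of fun j k : Fin d => ((1 / Real.sqrt d : ℝ) : ℂ) * q ^ ((j : ℕ) * (k : ℕ)))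
    (k : ℕ) (hk : k < d)
    (Pk : Matrix (Fin d) (Fin d) ℂ) (hPk : Pk = D ^ (-(k : ℤ)) * P₀) :
    Pkᴴ * (V * U ^ k) * Pk = U := by
  have hd0 : d ≠ 0 := by omega
  have hprim : IsPrimitiveRoot q d := by
    rw [hq]; exact Complex.isPrimitiveRoot_exp d hd0
  have hqd : q ^ d = 1 := hprim.pow_eq_one
  have hq0 : q ≠ 0 := by rw [hq]; exact Complex.exp_ne_zero _
  have hstar : star q * q = 1 := by
    rw [hq, Complex.star_def, ← Complex.exp_conj, ← Complex.exp_add, ← Complex.exp_zero]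
    congr 1
    rw [map_div₀]
    simp [Complex.conj_I, map_ofNat]
    ring
  have hstarq : star q = q⁻¹ := eq_inv_of_mul_eq_one_left hstar
  have hpowmod : ∀ a : ℕ, q ^ (a % d) = q ^ a := by
    intro a
    conv_rhs => rw [← Nat.div_add_mod a d]
    rw [pow_add, pow_mul, hqd, one_pow, one_mul]
  set c : Fin d → ℂ := fun j => q ^ ((j : ℕ) * ((j : ℕ) + 1) / 2) with hc
  have hc0 : ∀ j, c j ≠ 0 := fun j => pow_ne_zero _ hq0
  set E : Matrix (Fin d) (Fin d) ℂ := Matrix.diagonal (fun j => ((c j)⁻¹) ^ k) with hE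
  have hPkE : Pk = E * P₀ := by
    rw [hPk, hD]
    congr 1
    have hdet : IsUnit (Matrix.diagonal c).det := by
      rw [Matrix.det_diagonal]
      exact isUnit_iff_ne_zero.mpr (Finset.prod_ne_zero_iff.mpr fun j _ => hc0 j)
    rw [Matrix.zpow_neg hdet, zpow_natCast]
    apply Matrix.inv_eq_right_inv
    rw [Matrix.diagonal_pow, hE, Matrix.diagonal_mul_diagonal]
    have h1 : (fun i => (c ^ k) i * ((c i)⁻¹) ^ k) = fun _ => (1 : ℂ) := by
      funext i
      show c i ^ k * ((c i)⁻¹) ^ k = 1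
      rw [← mul_pow, mul_inv_cancel₀ (hc0 i), one_pow]
    rw [h1, Matrix.diagonal_one]
  have hEH : Eᴴ = Matrix.diagonal (fun j => (c j) ^ k) := by
    rw [hE, Matrix.diagonal_conjTranspose]
    have hfun : (star fun j : Fin d => ((c j)⁻¹) ^ k) = fun j => c j ^ k := by
      funext j
      show star ((c j)⁻¹ ^ k) = c j ^ k
      simp only [hc, star_pow, star_inv₀, hstarq, inv_pow, inv_inv]
    rw [hfun]
  -- key arithmetic identity
  have key : ∀ j l : Fin d, (l : ℕ) = ((j : ℕ) + 1) % d →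
      q ^ ((j : ℕ) * ((j : ℕ) + 1) / 2 + (l : ℕ)) = q ^ ((l : ℕ) * ((l : ℕ) + 1) / 2) := by
    intro j l h
    rcases Nat.lt_or_ge ((j : ℕ) + 1) d with h1 | h1
    · have hl : (l : ℕ) = (j : ℕ) + 1 := by rw [h, Nat.mod_eq_of_lt h1]
      congr 1
      rw [hl]
      have e1 : Even ((j : ℕ) * ((j : ℕ) + 1)) := Nat.even_mul_succ_self _
      obtain ⟨t, ht⟩ := e1
      have e2 : ((j : ℕ) + 1) * ((j : ℕ) + 1 + 1) = (j : ℕ) * ((j : ℕ) + 1) + 2 * ((j : ℕ) + 1) := by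
        ring
      omega
    · have hj1 : (j : ℕ) + 1 = d := by have := j.isLt; omega
      have hl0 : (l : ℕ) = 0 := by rw [h, hj1, Nat.mod_self]
      obtain ⟨t, ht⟩ := hd
      have hjt : (j : ℕ) = 2 * t := by omega
      have hdiv : (j : ℕ) * ((j : ℕ) + 1) / 2 = t * d := by
        rw [hjt, show 2 * t * (2 * t + 1) = 2 * (t * (2 * t + 1)) from by ring,
          Nat.mul_div_cancel_left _ two_pos, ht]
      rw [hdiv, hl0]
      simp only [Nat.zero_mul, Nat.zero_div, pow_zero, add_zero]
      rw [mul_comm, pow_mul, hqd, one_pow]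
  -- middle sandwich
  have hmid : Eᴴ * (V * U ^ k) * E = V := by
    rw [hEH, hE, hV, hU, Matrix.diagonal_pow]
    ext j l
    rw [Matrix.mul_diagonal, Matrix.diagonal_mul, Matrix.mul_diagonal]
    simp only [Matrix.of_apply, Pi.pow_apply]
    split_ifs with hcond
    · rw [one_mul, ← mul_pow, ← mul_pow]
      show (q ^ ((j : ℕ) * ((j : ℕ) + 1) / 2) * q ^ (l : ℕ) * (q ^ ((l : ℕ) * ((l : ℕ) + 1) / 2))⁻¹) ^ k = 1
      rw [← pow_add, key j l hcond, mul_inv_cancel₀ (pow_ne_zero _ hq0), one_pow]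
    · ring
  -- final step: P₀ᴴ * V * P₀ = U
  have hVP : ∀ (j n : Fin d), (V * P₀) j n
      = ((1 / Real.sqrt d : ℝ) : ℂ) * q ^ (((j : ℕ) + 1) * (n : ℕ)) := by
    intro j n
    rw [hV, hP₀, Matrix.mul_apply]
    rw [Finset.sum_eq_single (⟨((j : ℕ) + 1) % d, Nat.mod_lt _ (by omega)⟩ : Fin d)]
    · simp only [Matrix.of_apply, if_true, one_mul]
      congr 1
      rw [pow_mul, pow_mul, hpowmod]
    · intro b _ hb
      simp only [Matrix.of_apply]
      rw [if_neg (fun hcc => hb (Fin.ext hcc)), zero_mul]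
    · intro hmem; exact absurd (Finset.mem_univ _) hmem
  have hfin : P₀ᴴ * V * P₀ = U := by
    rw [Matrix.mul_assoc]
    ext m n
    rw [Matrix.mul_apply, hU]
    simp only [Matrix.conjTranspose_apply, hVP]
    set C : ℂ := ((1 / Real.sqrt d : ℝ) : ℂ) with hC
    set x : ℂ := (star q) ^ (m : ℕ) * q ^ (n : ℕ) with hx
    have hCstar : star C = C := by
      rw [hC]
      exact Complex.conj_ofReal _
    have hterm : ∀ j : Fin d, star (P₀ j m) * (C * q ^ (((j : ℕ) + 1) * (n : ℕ)))
        = (C * C) * (q ^ (n : ℕ) * x ^ (j : ℕ)) := by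
      intro j
      rw [hP₀]
      simp only [Matrix.of_apply, star_mul', star_pow, hCstar]
      rw [hx, mul_pow, ← pow_mul, ← pow_mul, mul_comm ((m : ℕ)) ((j : ℕ)),
        mul_comm ((n : ℕ)) ((j : ℕ)), add_mul, one_mul, pow_add]
      ring
    rw [Finset.sum_congr rfl fun j _ => hterm j]
    have hsum : ∑ j : Fin d, (C * C) * (q ^ (n : ℕ) * x ^ (j : ℕ))
        = (C * C) * q ^ (n : ℕ) * ∑ i ∈ Finset.range d, x ^ i := by
      rw [← Fin.sum_univ_eq_sum_range (fun i => x ^ i) d, Finset.mul_sum]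
      exact Finset.sum_congr rfl fun j _ => by ring
    rw [hsum]
    have hCC : C * C * (d : ℂ) = 1 := by
      rw [hC, ← Complex.ofReal_mul, div_mul_div_comm, one_mul,
        Real.mul_self_sqrt (Nat.cast_nonneg d), ← Complex.ofReal_natCast,
        ← Complex.ofReal_one, one_div, ← Complex.ofReal_mul,
        inv_mul_cancel₀ (Nat.cast_ne_zero.mpr hd0)]
    by_cases hmn : m = n
    · have hx1 : x = 1 := by
        rw [hx, hmn, ← mul_pow, hstar, one_pow]
      subst hmn
      rw [hx1, Matrix.diagonal_apply_eq]
      simp only [one_pow, Finset.sum_const, Finset.card_range, nsmul_eq_mul, mul_one]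
      calc C * C * q ^ (m : ℕ) * (d : ℂ) = (C * C * (d : ℂ)) * q ^ (m : ℕ) := by ring
        _ = q ^ (m : ℕ) := by rw [hCC, one_mul]
    · have hxd : x ^ d = 1 := by
        rw [hx, mul_pow, ← pow_mul, ← pow_mul, mul_comm (m : ℕ) d, mul_comm (n : ℕ) d,
          pow_mul, pow_mul, ← star_pow, hqd, star_one, one_pow, one_pow, one_mul]
      have hx1 : x ≠ 1 := by
        intro hcon
        apply hmn
        have h2 : q ^ (n : ℕ) = q ^ (m : ℕ) := by
          have h3 : x * q ^ (m : ℕ) = q ^ (m : ℕ) := by rw [hcon, one_mul]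
          rw [hx] at h3
          calc q ^ (n : ℕ) = (star q * q) ^ (m : ℕ) * q ^ (n : ℕ) := by rw [hstar, one_pow, one_mul]
            _ = star q ^ (m : ℕ) * q ^ (n : ℕ) * q ^ (m : ℕ) := by rw [mul_pow]; ring
            _ = q ^ (m : ℕ) := h3
        exact Fin.ext (hprim.pow_inj n.isLt m.isLt h2).symm
      rw [geom_sum_eq hx1, hxd, sub_self, zero_div, mul_zero,
        Matrix.diagonal_apply_ne _ hmn]
  -- assemble
  rw [hPkE, Matrix.conjTranspose_mul]
  calc P₀ᴴ * Eᴴ * (V * U ^ k) * (E * P₀)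
      = P₀ᴴ * (Eᴴ * (V * U ^ k) * E) * P₀ := by
        simp only [Matrix.mul_assoc]
    _ = P₀ᴴ * V * P₀ := by rw [hmid]
    _ = U := hfin
end

section
/- Let d be odd, q = exp(2πi/d), P₀ the DFT matrix with entries d^{-1/2} q^{jk}, D = diag(q^{j(j+1)/2}), and k coprime to d. Then every entry of the matrix P₀* D^k P₀ has modulus d^{-1/2}. -/
/-!
Since `d` is odd, `2` is invertible mod `d`, so with `ψ = ZMod.stdAddChar` every entry of
`P₀* D^k P₀` is `d⁻¹ ∑ₓ ψ(a x² + b x)` over `x ∈ ZMod d`, where `2a = k` is a unit.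
For such a quadratic sum `S`, Weyl differencing gives
`|S|² = ∑ₜ ψ(a t² + b t) ∑ₓ ψ(2a t x)`, and by orthogonality of characters only `t = 0`
survives, so `|S|² = d`.
-/

open Matrix Finset ComplexConjugate

namespace AddChar

variable {R : Type*} [CommRing R] [Fintype R] [DecidableEq R] {ψ : AddChar R ℂ}

theorem sum_quadratic_mul_conj (hψ : ψ.IsPrimitive) {a b : R} (ha : IsUnit (2 * a)) :
    (∑ x, ψ (a * x ^ 2 + b * x)) * conj (∑ x, ψ (a * x ^ 2 + b * x)) = Fintype.card R := by
  set Q : R → R := fun x => a * x ^ 2 + b * x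
  have hQ : ∀ x t, Q (x + t) - Q x = Q t + x * (2 * a * t) := fun x t => by simp only [Q]; ring
  calc _ = ∑ x, ∑ t, ψ (Q (x + t)) * conj (ψ (Q x)) := by
          rw [map_sum, sum_mul_sum, sum_comm]
          exact sum_congr rfl fun x _ => (Equiv.sum_comp (Equiv.addLeft x) fun y => ψ (Q y) * _).symm
    _ = ∑ t, ψ (Q t) * ∑ x, ψ (x * (2 * a * t)) := by
          rw [sum_comm]
          refine sum_congr rfl fun t _ => ?_
          rw [mul_sum]
          refine sum_congr rfl fun x _ => ?_
          rw [← map_neg_eq_conj, ← map_add_eq_mul, ← sub_eq_add_neg, hQ, map_add_eq_mul]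
    _ = Fintype.card R := by
          simp_rw [sum_mulShift _ hψ, ha.mul_right_eq_zero]
          simp [Q]

theorem norm_sum_quadratic (hψ : ψ.IsPrimitive) {a : R} (b : R) (ha : IsUnit (2 * a)) :
    ‖∑ x, ψ (a * x ^ 2 + b * x)‖ = √(Fintype.card R) := by
  have h := sum_quadratic_mul_conj hψ (b := b) ha
  rw [Complex.mul_conj, Complex.normSq_eq_norm_sq] at h
  rw [← Real.sqrt_sq (norm_nonneg _)]
  exact congrArg Real.sqrt (by exact_mod_cast h)

end AddChar

theorem Nat.cast_mul_succ_div_two {R : Type*} [CommSemiring R] {h : R} (h2 : 2 * h = 1) (m : ℕ) :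
    ((m * (m + 1) / 2 : ℕ) : R) = h * (m ^ 2 + m) := by
  have hT : 2 * ((m * (m + 1) / 2 : ℕ) : R) = m ^ 2 + m := by
    rw [← Nat.cast_ofNat, ← Nat.cast_mul, Nat.mul_div_cancel' (Nat.even_mul_succ_self m).two_dvd]
    push_cast; ring
  rw [← hT, ← mul_assoc, mul_comm h, h2, one_mul]

theorem ZMod.sum_fin_natCast {M : Type*} [AddCommMonoid M] (d : ℕ) [NeZero d] (g : ZMod d → M) :
    ∑ m : Fin d, g (m : ℕ) = ∑ x, g x := by
  refine Function.Bijective.sum_comp ?_ g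
  refine (Fintype.bijective_iff_injective_and_card _).mpr ⟨fun m n hmn => ?_, by simp⟩
  have := congrArg ZMod.val hmn
  rwa [ZMod.val_natCast_of_lt m.isLt, ZMod.val_natCast_of_lt n.isLt, Fin.val_inj] at this

noncomputable def dftMatrix (d : ℕ) (q : ℂ) : Matrix (Fin d) (Fin d) ℂ :=
  of fun j k : Fin d => ((1 / √d : ℝ) : ℂ) * q ^ ((j : ℕ) * (k : ℕ))

def chirpMatrix (d : ℕ) (q : ℂ) : Matrix (Fin d) (Fin d) ℂ :=
  diagonal fun j : Fin d => q ^ ((j : ℕ) * ((j : ℕ) + 1) / 2)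

theorem conjTranspose_dftMatrix_mul_chirpMatrix_pow_mul_dftMatrix_apply {d : ℕ} [NeZero d]
    {q : ℂ} {ψ : AddChar (ZMod d) ℂ} (hq : ∀ n : ℕ, q ^ n = ψ n) {h : ZMod d} (h2 : 2 * h = 1)
    (k : ℕ) (i j : Fin d) :
    ((dftMatrix d q)ᴴ * chirpMatrix d q ^ k * dftMatrix d q) i j
      = (d : ℂ)⁻¹ * ∑ x : ZMod d, ψ (k * h * x ^ 2 + (k * h + ((j : ℕ) - (i : ℕ) : ZMod d)) * x) := by
  rw [chirpMatrix, diagonal_pow, mul_apply, ← ZMod.sum_fin_natCast, mul_sum]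
  refine sum_congr rfl fun m _ => ?_
  simp only [dftMatrix, mul_diagonal, conjTranspose_apply, of_apply, Pi.pow_apply, star_mul',
    Complex.star_def, Complex.conj_ofReal]
  rw [← pow_mul, hq, hq, hq, ← AddChar.map_neg_eq_conj]
  have hc : ((1 / √d : ℝ) : ℂ) * ((1 / √d : ℝ) : ℂ) = (d : ℂ)⁻¹ := by
    rw [← Complex.ofReal_mul, one_div_mul_one_div, Real.mul_self_sqrt d.cast_nonneg]
    push_cast; ring
  have hexp : (k : ZMod d) * h * (m : ℕ) ^ 2 + (k * h + ((j : ℕ) - (i : ℕ))) * (m : ℕ)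
      = -((m * i : ℕ) : ZMod d) + ((m * (m + 1) / 2 * k : ℕ) : ZMod d) + ((m * j : ℕ) : ZMod d) := by
    rw [Nat.cast_mul _ k, Nat.cast_mul_succ_div_two h2]
    push_cast; ring
  rw [hexp, AddChar.map_add_eq_mul, AddChar.map_add_eq_mul, ← hc]
  ring

theorem stmt_14_general (d : ℕ) (hd : Odd d) (q : ℂ)
    (hq : q = Complex.exp (2 * Real.pi * Complex.I / d))
    (D P₀ : Matrix (Fin d) (Fin d) ℂ)
    (hD : D = Matrix.diagonal fun j : Fin d => q ^ ((j : ℕ) * ((j : ℕ) + 1) / 2))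
    (hP₀ : P₀ = Matrix.of fun j k : Fin d => ((1 / Real.sqrt d : ℝ) : ℂ) * q ^ ((j : ℕ) * (k : ℕ)))
    (k : ℕ) (hk : Nat.Coprime k d) :
    ∀ i j, ‖(P₀ᴴ * D ^ k * P₀) i j‖ = 1 / Real.sqrt d := by
  intro i j
  have : NeZero d := ⟨hd.pos.ne'⟩
  have hqψ (n : ℕ) : q ^ n = ZMod.stdAddChar (n : ZMod d) := by
    rw [ZMod.stdAddChar_apply, ZMod.toCircle_natCast, hq, ← Complex.exp_nat_mul]; ring_nf
  obtain ⟨h, h2⟩ : ∃ h : ZMod d, 2 * h = 1 :=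
    ((ZMod.isUnit_iff_coprime 2 d).mpr (Nat.coprime_two_left.mpr hd)).exists_right_inv
  have hunit : IsUnit (2 * ((k : ZMod d) * h)) := by
    rw [mul_left_comm, h2, mul_one]
    exact (ZMod.isUnit_iff_coprime k d).mpr hk
  rw [show D = chirpMatrix d q from hD, show P₀ = dftMatrix d q from hP₀,
    conjTranspose_dftMatrix_mul_chirpMatrix_pow_mul_dftMatrix_apply hqψ h2, norm_mul,
    AddChar.norm_sum_quadratic (ZMod.isPrimitive_stdAddChar d) _ hunit, ZMod.card, norm_inv,
    Complex.norm_natCast, inv_mul_eq_div, Real.sqrt_div_self']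

theorem stmt_14 (d : ℕ) (hd : Odd d) (hd2 : 2 ≤ d) (q : ℂ)
    (hq : q = Complex.exp (2 * Real.pi * Complex.I / d))
    (D P₀ : Matrix (Fin d) (Fin d) ℂ)
    (hD : D = Matrix.diagonal fun j : Fin d => q ^ ((j : ℕ) * ((j : ℕ) + 1) / 2))
    (hP₀ : P₀ = Matrix.of fun j k : Fin d => ((1 / Real.sqrt d : ℝ) : ℂ) * q ^ ((j : ℕ) * (k : ℕ)))
    (k : ℕ) (hk : Nat.Coprime k d) :
    ∀ i j, ‖(P₀ᴴ * D ^ k * P₀) i j‖ = 1 / Real.sqrt d :=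
  stmt_14_general d hd q hq D P₀ hD hP₀ k hk
end
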